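/- arXiv:0808.2062 — 3 statements merged into one kernel-verified Lean document; each statement's English description precedes it below -/
import Mathlib

section
/- Fix a smooth function f1 : ℝ → ℝ and consider the flux vector F(x,u) = n(x) × (f1(u) e₁) on the unit sphere S², where e₁ = (1,0,0). If u0 : S² → ℝ has the form u0(x) = g(x₁) for a smooth g : ℝ → ℝ (i.e. u0 depends only on the first Cartesian coordinate), then the tangent field x ↦ F(x, u0(x)) is divergence-free on S²: ∫_{S²} F(x,u0(x)) · ∇_T ψ dσ = 0 for all smooth test functions ψ. Hence u0 is a stationary (time-independent) weak solution of ∂_t u + ∇_T · F(x,u) = 0. -/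
open Real Matrix MeasureTheory intervalIntegral

noncomputable section

/-- The pairing `∫_{S²} F · ∇_T ψ dσ` written in spherical coordinates: the
tangential gradient is `∇_T ψ = ((1/cos φ) ∂_λ ψ) i_λ + (∂_φ ψ) i_φ`, and the
surface measure is `cos φ dφ dλ`. -/
def sphPairing (Flam Fphi ψ : ℝ → ℝ → ℝ) : ℝ :=
  ∫ l in (0:ℝ)..(2 * π), ∫ p in (-(π / 2) : ℝ)..(π / 2),
    (Flam l p * deriv (fun l' => ψ l' p) l
      + Fphi l p * deriv (fun p' => ψ l p') p * Real.cos p)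

/-- first partial derivative of a two-variable function -/
def psl (ψ : ℝ → ℝ → ℝ) (l p : ℝ) : ℝ :=
  fderiv ℝ (fun q : ℝ × ℝ => ψ q.1 q.2) (l, p) (1, 0)

/-- second partial derivative of a two-variable function -/
def psp (ψ : ℝ → ℝ → ℝ) (l p : ℝ) : ℝ :=
  fderiv ℝ (fun q : ℝ × ℝ => ψ q.1 q.2) (l, p) (0, 1)

lemma psl_hasDerivAt {ψ : ℝ → ℝ → ℝ} (hψ : ContDiff ℝ (⊤ : ℕ∞) fun q : ℝ × ℝ => ψ q.1 q.2)
    (l p : ℝ) : HasDerivAt (fun l' => ψ l' p) (psl ψ l p) l := by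
  have h := ((hψ.differentiable (by simp)) (l, p)).hasFDerivAt
  have hline : HasDerivAt (fun l' : ℝ => (l', p)) ((1 : ℝ), (0 : ℝ)) l :=
    (hasDerivAt_id l).prodMk (hasDerivAt_const l p)
  exact h.comp_hasDerivAt l hline

lemma psp_hasDerivAt {ψ : ℝ → ℝ → ℝ} (hψ : ContDiff ℝ (⊤ : ℕ∞) fun q : ℝ × ℝ => ψ q.1 q.2)
    (l p : ℝ) : HasDerivAt (fun p' => ψ l p') (psp ψ l p) p := by
  have h := ((hψ.differentiable (by simp)) (l, p)).hasFDerivAt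
  have hline : HasDerivAt (fun p' : ℝ => (l, p')) ((0 : ℝ), (1 : ℝ)) p :=
    (hasDerivAt_const p l).prodMk (hasDerivAt_id p)
  exact h.comp_hasDerivAt p hline

lemma psl_cont {ψ : ℝ → ℝ → ℝ} (hψ : ContDiff ℝ (⊤ : ℕ∞) fun q : ℝ × ℝ => ψ q.1 q.2) :
    Continuous fun q : ℝ × ℝ => psl ψ q.1 q.2 :=
  (hψ.continuous_fderiv (by simp)).clm_apply continuous_const

lemma psp_cont {ψ : ℝ → ℝ → ℝ} (hψ : ContDiff ℝ (⊤ : ℕ∞) fun q : ℝ × ℝ => ψ q.1 q.2) :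
    Continuous fun q : ℝ × ℝ => psp ψ q.1 q.2 :=
  (hψ.continuous_fderiv (by simp)).clm_apply continuous_const

/-- for the flux `F(x,u) = n(x) × (f1(u) e₁)` and an initial datum
`u0(x) = g(x₁)` depending only on the first Cartesian coordinate
(`x₁ = cos φ cos λ`), the tangent field `x ↦ F(x, u0(x))`, whose spherical
components are `F_λ = f1(u0) sin φ cos λ`, `F_φ = -f1(u0) sin λ`, is divergence
free in the distributional sense: `∫_{S²} F(x,u0(x)) · ∇_T ψ dσ = 0` for every
smooth test function `ψ`. Hence `u0` is a stationary weak solution of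
`∂_t u + ∇_T · F(x,u) = 0`. -/
theorem stmt5 (f1 g : ℝ → ℝ) (hf1 : ContDiff ℝ (⊤ : ℕ∞) f1) (hg : ContDiff ℝ (⊤ : ℕ∞) g)
    (ψ : ℝ → ℝ → ℝ) (hψ : ContDiff ℝ (⊤ : ℕ∞) fun q : ℝ × ℝ => ψ q.1 q.2)
    (hper : ∀ l p, ψ (l + 2 * π) p = ψ l p) :
    sphPairing
      (fun l p => f1 (g (Real.cos p * Real.cos l)) * Real.sin p * Real.cos l)
      (fun l p => -(f1 (g (Real.cos p * Real.cos l))) * Real.sin l)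
      ψ = 0 := by
  -- the composed flux profile
  set φ : ℝ → ℝ := fun s => f1 (g s) with hφdef
  have hφ : ContDiff ℝ (⊤ : ℕ∞) φ := hf1.comp hg
  have hφd : ∀ s, HasDerivAt φ (deriv φ s) s :=
    fun s => ((hφ.differentiable (by simp)) s).hasDerivAt
  have hφc : Continuous φ := hφ.continuous
  have hφ'c : Continuous (deriv φ) := hφ.continuous_deriv (by simp)
  -- stream-function partial derivatives
  set u : ℝ → ℝ → ℝ := fun l p => -(φ (Real.cos p * Real.cos l)) * Real.cos p * Real.sin l
    with hudef
  set v : ℝ → ℝ → ℝ := fun l p => -(φ (Real.cos p * Real.cos l)) * Real.sin p * Real.cos l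
    with hvdef
  set w : ℝ → ℝ → ℝ := fun l p =>
      deriv φ (Real.cos p * Real.cos l) * (Real.sin p * Real.cos l * Real.cos p * Real.sin l)
        + φ (Real.cos p * Real.cos l) * (Real.sin p * Real.sin l) with hwdef
  -- inner argument derivatives
  have harg_p : ∀ l p : ℝ, HasDerivAt (fun p' => Real.cos p' * Real.cos l)
      (-Real.sin p * Real.cos l) p := fun l p => (Real.hasDerivAt_cos p).mul_const _
  have harg_l : ∀ l p : ℝ, HasDerivAt (fun l' => Real.cos p * Real.cos l')
      (Real.cos p * -Real.sin l) l := fun l p => (Real.hasDerivAt_cos l).const_mul _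
  have hu_p : ∀ l p : ℝ, HasDerivAt (fun p' => u l p') (w l p) p := by
    intro l p
    have h1 : HasDerivAt (fun p' => φ (Real.cos p' * Real.cos l))
        (deriv φ (Real.cos p * Real.cos l) * (-Real.sin p * Real.cos l)) p :=
      (hφd _).comp p (harg_p l p)
    have h2 := ((h1.neg.mul (Real.hasDerivAt_cos p)).mul_const (Real.sin l))
    refine h2.congr_deriv ?_
    try simp only [hwdef, hudef, Pi.neg_apply]
    ring
  have hv_l : ∀ l p : ℝ, HasDerivAt (fun l' => v l' p) (w l p) l := by
    intro l p
    have h1 : HasDerivAt (fun l' => φ (Real.cos p * Real.cos l'))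
        (deriv φ (Real.cos p * Real.cos l) * (Real.cos p * -Real.sin l)) l :=
      (hφd _).comp l (harg_l l p)
    have h2 := (((h1.neg.mul_const (Real.sin p)).mul (Real.hasDerivAt_cos l)))
    refine h2.congr_deriv ?_
    try simp only [hwdef, hvdef, Pi.neg_apply]
    ring
  -- the products with the test function
  have hA : ∀ l p : ℝ, HasDerivAt (fun p' => ψ l p' * u l p')
      (psp ψ l p * u l p + ψ l p * w l p) p :=
    fun l p => (psp_hasDerivAt hψ l p).mul (hu_p l p)
  have hB : ∀ l p : ℝ, HasDerivAt (fun l' => ψ l' p * v l' p)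
      (psl ψ l p * v l p + ψ l p * w l p) l :=
    fun l p => (psl_hasDerivAt hψ l p).mul (hv_l l p)
  -- continuity of everything in sight
  have hψc : Continuous fun q : ℝ × ℝ => ψ q.1 q.2 := hψ.continuous
  have huc : Continuous fun q : ℝ × ℝ => u q.1 q.2 := by
    simp only [hudef]
    fun_prop
  have hvc : Continuous fun q : ℝ × ℝ => v q.1 q.2 := by
    simp only [hvdef]
    fun_prop
  have hwc : Continuous fun q : ℝ × ℝ => w q.1 q.2 := by
    simp only [hwdef]
    fun_prop
  have hDAc : Continuous fun q : ℝ × ℝ => psp ψ q.1 q.2 * u q.1 q.2 + ψ q.1 q.2 * w q.1 q.2 :=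
    ((psp_cont hψ).mul huc).add (hψc.mul hwc)
  have hDBc : Continuous fun q : ℝ × ℝ => psl ψ q.1 q.2 * v q.1 q.2 + ψ q.1 q.2 * w q.1 q.2 :=
    ((psl_cont hψ).mul hvc).add (hψc.mul hwc)
  have hcontA : ∀ l : ℝ, Continuous fun p => psp ψ l p * u l p + ψ l p * w l p :=
    fun l => hDAc.comp (continuous_const.prodMk continuous_id)
  have hcontB : ∀ l : ℝ, Continuous fun p => psl ψ l p * v l p + ψ l p * w l p :=
    fun l => hDBc.comp (continuous_const.prodMk continuous_id)
  have hcontB' : ∀ p : ℝ, Continuous fun l => psl ψ l p * v l p + ψ l p * w l p :=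
    fun p => hDBc.comp (continuous_id.prodMk continuous_const)
  -- pointwise identity for the integrand
  have key : ∀ l p : ℝ,
      (f1 (g (Real.cos p * Real.cos l)) * Real.sin p * Real.cos l) * deriv (fun l' => ψ l' p) l
        + (-(f1 (g (Real.cos p * Real.cos l))) * Real.sin l) * deriv (fun p' => ψ l p') p
          * Real.cos p
      = (psp ψ l p * u l p + ψ l p * w l p) - (psl ψ l p * v l p + ψ l p * w l p) := by
    intro l p
    rw [(psl_hasDerivAt hψ l p).deriv, (psp_hasDerivAt hψ l p).deriv]
    simp only [hudef, hvdef, hφdef]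
    ring
  -- bounds
  have hle1 : (0 : ℝ) ≤ 2 * π := by positivity
  have hle2 : (-(π / 2) : ℝ) ≤ π / 2 := by
    have := Real.pi_pos; linarith
  -- the inner (p) integral of the A-part vanishes
  have hAint : ∀ l : ℝ, (∫ p in (-(π / 2) : ℝ)..(π / 2),
      (psp ψ l p * u l p + ψ l p * w l p)) = 0 := by
    intro l
    have hint : IntervalIntegrable (fun p => psp ψ l p * u l p + ψ l p * w l p)
        volume (-(π / 2)) (π / 2) :=
      (hcontA l).intervalIntegrable _ _
    rw [intervalIntegral.integral_eq_sub_of_hasDerivAt (fun p _ => hA l p) hint]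
    simp [hudef, Real.cos_pi_div_two]
  -- FTC in the l-direction for the B-part
  have hBint : ∀ p : ℝ, (∫ l in (0:ℝ)..(2 * π),
      (psl ψ l p * v l p + ψ l p * w l p)) = 0 := by
    intro p
    have hint : IntervalIntegrable (fun l => psl ψ l p * v l p + ψ l p * w l p)
        volume 0 (2 * π) :=
      (hcontB' p).intervalIntegrable _ _
    rw [intervalIntegral.integral_eq_sub_of_hasDerivAt (fun l _ => hB l p) hint]
    have hψper : ψ (2 * π) p = ψ 0 p := by
      simpa using hper 0 p
    simp [hvdef, hψper, Real.cos_two_pi, Real.sin_two_pi]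
  -- integrability on the rectangle for Fubini
  have hrect : Integrable
      (Function.uncurry fun l p => psl ψ l p * v l p + ψ l p * w l p)
      ((volume.restrict (Set.Ioc (0:ℝ) (2 * π))).prod
        (volume.restrict (Set.Ioc (-(π / 2) : ℝ) (π / 2)))) := by
    rw [Measure.prod_restrict]
    refine MeasureTheory.IntegrableOn.mono_set
      (t := Set.Icc (0:ℝ) (2 * π) ×ˢ Set.Icc (-(π / 2):ℝ) (π / 2)) ?_
      (Set.prod_mono Set.Ioc_subset_Icc_self Set.Ioc_subset_Icc_self)
    exact hDBc.continuousOn.integrableOn_compact (isCompact_Icc.prod isCompact_Icc)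
  -- put everything together
  rw [sphPairing]
  have step1 : (∫ l in (0:ℝ)..(2 * π), ∫ p in (-(π / 2) : ℝ)..(π / 2),
      ((fun l p => f1 (g (Real.cos p * Real.cos l)) * Real.sin p * Real.cos l) l p
          * deriv (fun l' => ψ l' p) l
        + (fun l p => -(f1 (g (Real.cos p * Real.cos l))) * Real.sin l) l p
          * deriv (fun p' => ψ l p') p * Real.cos p))
      = ∫ l in (0:ℝ)..(2 * π), ∫ p in (-(π / 2) : ℝ)..(π / 2),
        ((psp ψ l p * u l p + ψ l p * w l p) - (psl ψ l p * v l p + ψ l p * w l p)) := by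
    congr 1
    funext l
    congr 1
    funext p
    exact key l p
  rw [step1]
  have step2 : (∫ l in (0:ℝ)..(2 * π), ∫ p in (-(π / 2) : ℝ)..(π / 2),
      ((psp ψ l p * u l p + ψ l p * w l p) - (psl ψ l p * v l p + ψ l p * w l p)))
      = ∫ l in (0:ℝ)..(2 * π), (0 - ∫ p in (-(π / 2) : ℝ)..(π / 2),
          (psl ψ l p * v l p + ψ l p * w l p)) := by
    congr 1
    funext l
    rw [intervalIntegral.integral_sub ((hcontA l).intervalIntegrable _ _)
      ((hcontB l).intervalIntegrable _ _), hAint l]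
  rw [step2]
  simp only [zero_sub, intervalIntegral.integral_neg]
  rw [neg_eq_zero]
  -- Fubini
  rw [intervalIntegral.integral_of_le hle1]
  have step3 : (∫ l in Set.Ioc (0:ℝ) (2 * π), (∫ p in (-(π / 2) : ℝ)..(π / 2),
      (psl ψ l p * v l p + ψ l p * w l p)))
      = ∫ l in Set.Ioc (0:ℝ) (2 * π), (∫ p in Set.Ioc (-(π / 2) : ℝ) (π / 2),
          (psl ψ l p * v l p + ψ l p * w l p)) := by
    congr 1
    funext l
    rw [intervalIntegral.integral_of_le hle2]
  rw [step3]
  rw [MeasureTheory.integral_integral_swap hrect]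
  have step4 : ∀ p : ℝ, (∫ l in Set.Ioc (0:ℝ) (2 * π),
      (psl ψ l p * v l p + ψ l p * w l p)) = 0 := by
    intro p
    rw [← intervalIntegral.integral_of_le hle1]
    exact hBint p
  simp [step4]
end
end

section
/- In spherical coordinates, any function of the form u0(λ,φ) = g(cos φ cos λ) is a stationary solution of the conservation law ∂_t u + ∇_T·(n × f1(u) e₁) = 0, i.e. the field with components F_λ = f1(u0) sin φ cos λ, F_φ = -f1(u0) sin λ satisfies (1/cos φ)(∂_φ(F_φ cos φ) + ∂_λ F_λ) = 0 pointwise for φ ∈ (-π/2, π/2), where f1 and g are smooth. -/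
open Real

/-- in spherical coordinates, any `u0(λ,φ) = g(cos φ cos λ)` is a
stationary solution of `∂_t u + ∇_T·(n × f1(u) e₁) = 0`: the field with
components `F_λ = f1(u0) sin φ cos λ`, `F_φ = -f1(u0) sin λ` satisfies
`(1/cos φ)(∂_φ(F_φ cos φ) + ∂_λ F_λ) = 0` pointwise for `φ ∈ (-π/2, π/2)`. -/
theorem stmt6 (f1 g : ℝ → ℝ) (hf1 : ContDiff ℝ (⊤ : ℕ∞) f1) (hg : ContDiff ℝ (⊤ : ℕ∞) g)
    (lam phi : ℝ) (hphi : phi ∈ Set.Ioo (-(π / 2)) (π / 2)) :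
    (1 / Real.cos phi) *
      (deriv (fun p =>
          (-(f1 (g (Real.cos p * Real.cos lam))) * Real.sin lam) * Real.cos p) phi
        + deriv (fun l =>
          f1 (g (Real.cos phi * Real.cos l)) * Real.sin phi * Real.cos l) lam) = 0 := by
  have hF : Differentiable ℝ (fun x => f1 (g x)) :=
    (hf1.differentiable (by simp)).comp (hg.differentiable (by simp))
  set c := Real.cos phi * Real.cos lam with hc
  set d := deriv (fun x => f1 (g x)) c with hd
  have hFc : HasDerivAt (fun x => f1 (g x)) d c := (hF c).hasDerivAt
  -- derivative in phi
  have hp : HasDerivAt (fun p => Real.cos p * Real.cos lam)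
      (-Real.sin phi * Real.cos lam) phi := (Real.hasDerivAt_cos phi).mul_const _
  have h1 : HasDerivAt (fun p => f1 (g (Real.cos p * Real.cos lam)))
      (d * (-Real.sin phi * Real.cos lam)) phi := HasDerivAt.comp (h₂ := fun x => f1 (g x)) phi hFc hp
  have H1 := ((h1.fun_neg.mul_const (Real.sin lam)).fun_mul (Real.hasDerivAt_cos phi))
  -- derivative in lam
  have hl : HasDerivAt (fun l => Real.cos phi * Real.cos l)
      (Real.cos phi * -Real.sin lam) lam := (Real.hasDerivAt_cos lam).const_mul _
  have h2 : HasDerivAt (fun l => f1 (g (Real.cos phi * Real.cos l)))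
      (d * (Real.cos phi * -Real.sin lam)) lam := HasDerivAt.comp (h₂ := fun x => f1 (g x)) lam hFc hl
  have H2 := ((h2.mul_const (Real.sin phi)).fun_mul (Real.hasDerivAt_cos lam))
  rw [H1.deriv, H2.deriv]
  ring
end

section
/- Let f : ℝ → ℝ be smooth and consider the flux F(x,u) = f(u) · (n(x) × (e₁ + e₂ + e₃)) on S². If u0(x) = ũ0(x₁ + x₂ + x₃) for some smooth ũ0 : ℝ → ℝ, then F(x, u0(x)) = n(x) × ∇H(x) where H(x) = H0(x₁+x₂+x₃) with H0' = f ∘ ũ0, and consequently the tangential divergence of x ↦ F(x, u0(x)) vanishes on S² (in the distributional sense), so u0 is a stationary solution. -/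
open Real Matrix MeasureTheory intervalIntegral

noncomputable section

/-- Euclidean gradient of a function on ℝ³. -/
def grad3 (H : (Fin 3 → ℝ) → ℝ) (x : Fin 3 → ℝ) : Fin 3 → ℝ :=
  fun i => fderiv ℝ H x (Pi.single i 1)

/- Auxiliary definitions -/
/-- the argument `x₁+x₂+x₃` in spherical coordinates -/
def S (l p : ℝ) : ℝ := Real.cos p * Real.cos l + Real.cos p * Real.sin l + Real.sin p
/-- ∂S/∂l -/
def SL (l p : ℝ) : ℝ := Real.cos p * -Real.sin l + Real.cos p * Real.cos l
/-- ∂S/∂p -/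
def SP (l p : ℝ) : ℝ := -Real.sin p * Real.cos l + -Real.sin p * Real.sin l + Real.cos p

lemma hasDerivAt_S_l (l p : ℝ) : HasDerivAt (fun l' => S l' p) (SL l p) l := by
  have h1 : HasDerivAt (fun l' => Real.cos p * Real.cos l') (Real.cos p * -Real.sin l) l :=
    (Real.hasDerivAt_cos l).const_mul _
  have h2 : HasDerivAt (fun l' => Real.cos p * Real.sin l') (Real.cos p * Real.cos l) l :=
    (Real.hasDerivAt_sin l).const_mul _
  simpa [S, SL] using (h1.add h2).add_const (Real.sin p)

lemma hasDerivAt_S_p (l p : ℝ) : HasDerivAt (fun p' => S l p') (SP l p) p := by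
  have h1 : HasDerivAt (fun p' => Real.cos p' * Real.cos l) (-Real.sin p * Real.cos l) p :=
    (Real.hasDerivAt_cos p).mul_const _
  have h2 : HasDerivAt (fun p' => Real.cos p' * Real.sin l) (-Real.sin p * Real.sin l) p :=
    (Real.hasDerivAt_cos p).mul_const _
  simpa [S, SP, Pi.add_def] using (h1.add h2).add (Real.hasDerivAt_sin p)

lemma hasDerivAt_SL_p (l p : ℝ) :
    HasDerivAt (fun p' => SL l p') (-Real.sin p * -Real.sin l + -Real.sin p * Real.cos l) p := by
  have h1 : HasDerivAt (fun p' => Real.cos p' * -Real.sin l) (-Real.sin p * -Real.sin l) p :=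
    (Real.hasDerivAt_cos p).mul_const _
  have h2 : HasDerivAt (fun p' => Real.cos p' * Real.cos l) (-Real.sin p * Real.cos l) p :=
    (Real.hasDerivAt_cos p).mul_const _
  simpa [SL, Pi.add_def] using h1.add h2

lemma hasDerivAt_SP_l (l p : ℝ) :
    HasDerivAt (fun l' => SP l' p)
      (-Real.sin p * -Real.sin l + -Real.sin p * Real.cos l) l := by
  have h1 : HasDerivAt (fun l' => -Real.sin p * Real.cos l') (-Real.sin p * -Real.sin l) l :=
    (Real.hasDerivAt_cos l).const_mul _
  have h2 : HasDerivAt (fun l' => -Real.sin p * Real.sin l') (-Real.sin p * Real.cos l) l :=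
    (Real.hasDerivAt_sin l).const_mul _
  simpa [SP] using (h1.add h2).add_const (Real.cos p)

lemma continuous_S : Continuous fun q : ℝ × ℝ => S q.1 q.2 := by
  unfold S; fun_prop

lemma continuous_SL : Continuous fun q : ℝ × ℝ => SL q.1 q.2 := by
  unfold SL; fun_prop

lemma continuous_SP : Continuous fun q : ℝ × ℝ => SP q.1 q.2 := by
  unfold SP; fun_prop

set_option maxHeartbeats 2000000 in
/-- for the flux `F(x,u) = f(u) • (n(x) × (e₁+e₂+e₃))` and
`u0(x) = ũ0(x₁+x₂+x₃)`, one has `F(x,u0(x)) = n(x) × ∇H(x)` with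
`H(x) = H0(x₁+x₂+x₃)`, `H0' = f ∘ ũ0`; consequently the tangential divergence
of `x ↦ F(x,u0(x))` vanishes on `S²` in the distributional sense
(its spherical components are `F_λ = f(u0)(sin φ cos λ + sin φ sin λ - cos φ)`
and `F_φ = f(u0)(-sin λ + cos λ)`), so `u0` is a stationary solution. -/
theorem stmt7 (f u₀til H0 : ℝ → ℝ) (hf : ContDiff ℝ (⊤ : ℕ∞) f)
    (hu : ContDiff ℝ (⊤ : ℕ∞) u₀til)
    (hH0 : ∀ s, HasDerivAt H0 (f (u₀til s)) s) :
    (∀ x : Fin 3 → ℝ,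
      f (u₀til (x 0 + x 1 + x 2)) • crossProduct x ![1, 1, 1]
        = crossProduct x (grad3 (fun y => H0 (y 0 + y 1 + y 2)) x)) ∧
    ∀ ψ : ℝ → ℝ → ℝ, ContDiff ℝ (⊤ : ℕ∞) (fun q : ℝ × ℝ => ψ q.1 q.2) →
      (∀ l p, ψ (l + 2 * π) p = ψ l p) →
      sphPairing
        (fun l p =>
          f (u₀til (Real.cos p * Real.cos l + Real.cos p * Real.sin l + Real.sin p)) *
            (Real.sin p * Real.cos l + Real.sin p * Real.sin l - Real.cos p))
        (fun l p =>
          f (u₀til (Real.cos p * Real.cos l + Real.cos p * Real.sin l + Real.sin p)) *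
            (-Real.sin l + Real.cos l))
        ψ = 0 := by
  constructor
  · intro x
    have hL : HasFDerivAt (fun y : Fin 3 → ℝ => y 0 + y 1 + y 2)
        ((ContinuousLinearMap.proj (0:Fin 3) + ContinuousLinearMap.proj (1:Fin 3) + ContinuousLinearMap.proj (2:Fin 3) :
          (Fin 3 → ℝ) →L[ℝ] ℝ)) x :=
      (((ContinuousLinearMap.proj (R := ℝ) (φ := fun _ : Fin 3 => ℝ) (0:Fin 3)).hasFDerivAt).add
        ((ContinuousLinearMap.proj (1:Fin 3)).hasFDerivAt)).add
        ((ContinuousLinearMap.proj (2:Fin 3)).hasFDerivAt)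
    have hH : HasFDerivAt (fun y : Fin 3 → ℝ => H0 (y 0 + y 1 + y 2))
        (f (u₀til (x 0 + x 1 + x 2)) •
          (ContinuousLinearMap.proj (0:Fin 3) + ContinuousLinearMap.proj (1:Fin 3) + ContinuousLinearMap.proj (2:Fin 3) :
            (Fin 3 → ℝ) →L[ℝ] ℝ)) x :=
      (hH0 (x 0 + x 1 + x 2)).comp_hasFDerivAt x hL
    have hgrad : grad3 (fun y => H0 (y 0 + y 1 + y 2)) x
        = f (u₀til (x 0 + x 1 + x 2)) • ![1, 1, 1] := by
      funext i
      simp only [grad3, hH.fderiv]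
      fin_cases i <;>
        simp [Pi.single_apply, Fin.ext_iff, smul_eq_mul]
    rw [hgrad, LinearMap.map_smul]
  · intro ψ hψ hper
    -- abbreviation for f ∘ u₀til
    obtain ⟨g, hgdef⟩ : ∃ g : ℝ → ℝ, g = fun t => f (u₀til t) := ⟨_, rfl⟩
    have hg : ContDiff ℝ (⊤ : ℕ∞) g := by rw [hgdef]; exact hf.comp hu
    have hgd : ∀ t, HasDerivAt g (deriv g t) t :=
      fun t => (hg.differentiable (by simp) t).hasDerivAt
    -- partial derivatives of ψ
    have hψp_slice : ∀ l, ContDiff ℝ (⊤ : ℕ∞) (fun p' => ψ l p') :=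
      fun l => hψ.comp ((contDiff_const : ContDiff ℝ (⊤ : ℕ∞) fun _ : ℝ => l).prodMk contDiff_id)
    have hψl_slice : ∀ p, ContDiff ℝ (⊤ : ℕ∞) (fun l' => ψ l' p) :=
      fun p => hψ.comp (contDiff_id.prodMk (contDiff_const : ContDiff ℝ (⊤ : ℕ∞) fun _ : ℝ => p))
    have hψp : ∀ l p, HasDerivAt (fun p' => ψ l p') (deriv (fun p' => ψ l p') p) p :=
      fun l p => ((hψp_slice l).differentiable (by simp) p).hasDerivAt
    have hψl : ∀ l p, HasDerivAt (fun l' => ψ l' p) (deriv (fun l' => ψ l' p) l) l :=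
      fun l p => ((hψl_slice p).differentiable (by simp) l).hasDerivAt
    -- the partial derivative in l, expressed jointly continuously
    have hψl_eq : ∀ l p, deriv (fun l' => ψ l' p) l
        = fderiv ℝ (fun q : ℝ × ℝ => ψ q.1 q.2) (l, p) (1, 0) := by
      intro l p
      have hcurve : HasDerivAt (fun l' : ℝ => ((l' : ℝ), p)) ((1 : ℝ), (0 : ℝ)) l :=
        (hasDerivAt_id l).prodMk (hasDerivAt_const l p)
      have hcomp : HasDerivAt (fun l' => ψ l' p)
          (fderiv ℝ (fun q : ℝ × ℝ => ψ q.1 q.2) (l, p) (1, 0)) l :=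
        by have := ((hψ.differentiable (by simp) (l, p)).hasFDerivAt).comp_hasDerivAt l hcurve; exact this
      exact hcomp.deriv
    have hψl_cont : Continuous fun q : ℝ × ℝ => deriv (fun l' => ψ l' q.2) q.1 := by
      have : (fun q : ℝ × ℝ => deriv (fun l' => ψ l' q.2) q.1)
          = fun q : ℝ × ℝ => fderiv ℝ (fun q : ℝ × ℝ => ψ q.1 q.2) q (1, 0) := by
        funext q; exact hψl_eq q.1 q.2
      rw [this]
      exact (hψ.continuous_fderiv (by simp)).clm_apply continuous_const
    -- the two exact terms
    obtain ⟨DP, hDP⟩ : ∃ DP : ℝ → ℝ → ℝ, DP = fun l p =>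
        ((deriv g (S l p) * SP l p) * SL l p
            + g (S l p) * (-Real.sin p * -Real.sin l + -Real.sin p * Real.cos l)) * ψ l p
          + (g (S l p) * SL l p) * deriv (fun p' => ψ l p') p := ⟨_, rfl⟩
    obtain ⟨DL, hDL⟩ : ∃ DL : ℝ → ℝ → ℝ, DL = fun l p =>
        ((deriv g (S l p) * SL l p) * SP l p
            + g (S l p) * (-Real.sin p * -Real.sin l + -Real.sin p * Real.cos l)) * ψ l p
          + (g (S l p) * SP l p) * deriv (fun l' => ψ l' p) l := ⟨_, rfl⟩
    -- derivative identities
    have hA : ∀ l p, HasDerivAt (fun p' => g (S l p') * SL l p' * ψ l p') (DP l p) p := by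
      intro l p
      have h1 : HasDerivAt (fun p' => g (S l p')) (deriv g (S l p) * SP l p) p :=
        (hgd (S l p)).comp p (hasDerivAt_S_p l p)
      have h2 := (h1.mul (hasDerivAt_SL_p l p)).mul (hψp l p)
      simp only [hDP]
      exact h2
    have hB : ∀ l p, HasDerivAt (fun l' => g (S l' p) * SP l' p * ψ l' p) (DL l p) l := by
      intro l p
      have h1 : HasDerivAt (fun l' => g (S l' p)) (deriv g (S l p) * SL l p) l :=
        (hgd (S l p)).comp l (hasDerivAt_S_l l p)
      have h2 := (h1.mul (hasDerivAt_SP_l l p)).mul (hψl l p)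
      simp only [hDL]
      exact h2
    -- continuity facts
    have hgc : Continuous g := hg.continuous
    have hgdc : Continuous (deriv g) := hg.continuous_deriv (by simp)
    have hψc : Continuous fun q : ℝ × ℝ => ψ q.1 q.2 := hψ.continuous
    have hψpc : Continuous fun q : ℝ × ℝ => deriv (fun p' => ψ q.1 p') q.2 := by
      have : (fun q : ℝ × ℝ => deriv (fun p' => ψ q.1 p') q.2)
          = fun q : ℝ × ℝ => fderiv ℝ (fun q : ℝ × ℝ => ψ q.1 q.2) q (0, 1) := by
        funext q
        have hcurve : HasDerivAt (fun p' : ℝ => ((q.1 : ℝ), p')) ((0 : ℝ), (1 : ℝ)) q.2 :=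
          (hasDerivAt_const q.2 q.1).prodMk (hasDerivAt_id q.2)
        exact (((hψ.differentiable (by simp) q).hasFDerivAt).comp_hasDerivAt q.2 hcurve).deriv
      rw [this]
      exact (hψ.continuous_fderiv (by simp)).clm_apply continuous_const
    have c1 : Continuous fun q : ℝ × ℝ => deriv g (S q.1 q.2) := hgdc.comp continuous_S
    have c2 : Continuous fun q : ℝ × ℝ => g (S q.1 q.2) := hgc.comp continuous_S
    have ctrig : Continuous fun q : ℝ × ℝ =>
        -Real.sin q.2 * -Real.sin q.1 + -Real.sin q.2 * Real.cos q.1 := by fun_prop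
    have hDPc : Continuous fun q : ℝ × ℝ => DP q.1 q.2 := by
      simp only [hDP]
      exact ((((c1.mul continuous_SP).mul continuous_SL).add
        (c2.mul ctrig)).mul hψc).add (((c2.mul continuous_SL)).mul hψpc)
    have hDLc : Continuous fun q : ℝ × ℝ => DL q.1 q.2 := by
      simp only [hDL]
      exact ((((c1.mul continuous_SL).mul continuous_SP).add
        (c2.mul ctrig)).mul hψc).add (((c2.mul continuous_SP)).mul hψl_cont)
    have hDPc1 : ∀ l, Continuous fun p => DP l p :=
      fun l => hDPc.comp (Continuous.prodMk_right l)
    have hDLc1 : ∀ l, Continuous fun p => DL l p :=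
      fun l => hDLc.comp (Continuous.prodMk_right l)
    have hDLc2 : ∀ p, Continuous fun l => DL l p :=
      fun p => hDLc.comp (Continuous.prodMk_left p)
    -- inner integral of DP vanishes (FTC + zero boundary values at p = ±π/2)
    have hDPint : ∀ l, (∫ p in (-(π / 2) : ℝ)..(π / 2), DP l p) = 0 := by
      intro l
      rw [intervalIntegral.integral_eq_sub_of_hasDerivAt
        (fun p _ => hA l p) ((hDPc1 l).intervalIntegrable _ _)]
      simp [SL, Real.cos_pi_div_two]
    -- inner integral of DL in l over a full period vanishes
    have hDLint : ∀ p, (∫ l in (0 : ℝ)..(2 * π), DL l p) = 0 := by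
      intro p
      rw [intervalIntegral.integral_eq_sub_of_hasDerivAt
        (fun l _ => hB l p) ((hDLc2 p).intervalIntegrable _ _)]
      have h1 : S (2 * π) p = S 0 p := by simp [S]
      have h2 : SP (2 * π) p = SP 0 p := by simp [SP]
      have h3 : ψ (2 * π) p = ψ 0 p := by simpa using hper 0 p
      rw [h1, h2, h3, sub_self]
    -- Fubini for the DL double integral
    have hswap : (∫ l in (0 : ℝ)..(2 * π), ∫ p in (-(π / 2) : ℝ)..(π / 2), DL l p)
        = ∫ p in (-(π / 2) : ℝ)..(π / 2), ∫ l in (0 : ℝ)..(2 * π), DL l p := by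
      have h0 : (0 : ℝ) ≤ 2 * π := by positivity
      have h1 : (-(π / 2) : ℝ) ≤ π / 2 := by
        have := Real.pi_pos; linarith
      rw [intervalIntegral.integral_of_le h0, intervalIntegral.integral_of_le h1]
      simp_rw [intervalIntegral.integral_of_le h1, intervalIntegral.integral_of_le h0]
      apply MeasureTheory.integral_integral_swap
      rw [Measure.prod_restrict]
      have hcompact : IsCompact ((Set.Icc (0 : ℝ) (2 * π)) ×ˢ (Set.Icc (-(π / 2) : ℝ) (π / 2))) :=
        isCompact_Icc.prod isCompact_Icc
      have hint : IntegrableOn (fun q : ℝ × ℝ => DL q.1 q.2)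
          ((Set.Icc (0 : ℝ) (2 * π)) ×ˢ (Set.Icc (-(π / 2) : ℝ) (π / 2)))
          ((volume : Measure ℝ).prod volume) :=
        hDLc.continuousOn.integrableOn_compact hcompact
      exact hint.mono_set
        (Set.prod_mono Set.Ioc_subset_Icc_self Set.Ioc_subset_Icc_self)
    -- rewrite the pairing
    have hinteq : sphPairing
        (fun l p => f (u₀til (Real.cos p * Real.cos l + Real.cos p * Real.sin l + Real.sin p)) *
          (Real.sin p * Real.cos l + Real.sin p * Real.sin l - Real.cos p))
        (fun l p => f (u₀til (Real.cos p * Real.cos l + Real.cos p * Real.sin l + Real.sin p)) *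
          (-Real.sin l + Real.cos l)) ψ
        = ∫ l in (0 : ℝ)..(2 * π), ∫ p in (-(π / 2) : ℝ)..(π / 2), (DP l p - DL l p) := by
      unfold sphPairing
      apply intervalIntegral.integral_congr
      intro l _
      apply intervalIntegral.integral_congr
      intro p _
      simp only [hDP, hDL, hgdef, S, SL, SP]
      ring
    rw [hinteq]
    have : ∀ l, (∫ p in (-(π / 2) : ℝ)..(π / 2), (DP l p - DL l p))
        = - ∫ p in (-(π / 2) : ℝ)..(π / 2), DL l p := by
      intro l
      rw [intervalIntegral.integral_sub ((hDPc1 l).intervalIntegrable _ _)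
        ((hDLc1 l).intervalIntegrable _ _), hDPint l, zero_sub]
    simp_rw [this]
    rw [intervalIntegral.integral_neg, hswap]
    simp [hDLint]
end
end
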